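/- arXiv:1605.08669 — 3 statements merged into one kernel-verified Lean document; each statement's English description precedes it below -/
import Mathlib

section
/- Assume no three of the control points are collinear (λi ≠ 0 for i = 0,1,2,3), all weights are nonzero, φ1 ≠ 0, φ2 ≠ 0, and D := φ1²u2u3 − φ1φ2u1u2 + φ2φ3u1² ≠ 0. Define the point s = (φ1²u2u3·c0 − φ1φ2u1u2·c2 + φ2φ3u1²·c3)/D (a barycentric combination of c0, c2, c3). Then S̃1(s) = 0 and S̃2(s) = 0, and consequently q(s) = 0 and ∇q(s) = (0,0); i.e., s is the double point of the curve. -/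
noncomputable section

/-- Determinant of the matrix [[x, y, 1], [a₁, a₂, 1], [b₁, b₂, 1]]. -/
def det3 (x y a₁ a₂ b₁ b₂ : ℝ) : ℝ :=
  x * (a₂ - b₂) - y * (a₁ - b₁) + (a₁ * b₂ - a₂ * b₁)

/-- L_{ij}(x,y): the implicit linear form of the line through points `p` and `q`. -/
def lineL (p q : ℝ × ℝ) (x y : ℝ) : ℝ := det3 x y p.1 p.2 q.1 q.2

/-- λ_{ijk}: determinant of [[p₁,p₂,1],[q₁,q₂,1],[r₁,r₂,1]]. -/
def lam (p q r : ℝ × ℝ) : ℝ := det3 p.1 p.2 q.1 q.2 r.1 r.2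

/-- Gradient of a bivariate function. -/
def grad (f : ℝ → ℝ → ℝ) (x y : ℝ) : ℝ × ℝ :=
  (deriv (fun s => f s y) x, deriv (fun s => f x s) y)


/-!
Every `L_{ij}` is affine, so at a barycentric combination `s` of `c0, c2, c3` its value is the
same combination of its values at `c0, c2, c3`, which are `0` or `±λₖ`. Hence `S̃1(s)`, `S̃2(s)`
and `q(s)` are polynomials in the `uᵢ`, `λᵢ` and `D⁻¹` that vanish identically. The same holds
for the derivatives of `q` at `s` along `c2 - c0` and `c3 - c0`; as the cross product of these
directions is `λ1 ≠ 0`, they span the plane and `∇q(s) = 0`.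
-/

lemma lineL_left (p q : ℝ × ℝ) : lineL p q p.1 p.2 = 0 := by
  simp only [lineL, det3]; ring

lemma lineL_right (p q : ℝ × ℝ) : lineL p q q.1 q.2 = 0 := by
  simp only [lineL, det3]; ring

lemma lineL_controlPoints_eq_lam (c0 c1 c2 c3 : ℝ × ℝ) :
    lineL c1 c2 c0.1 c0.2 = lam c0 c1 c2 ∧ lineL c2 c3 c0.1 c0.2 = lam c2 c3 c0 ∧
    lineL c1 c3 c0.1 c0.2 = -lam c1 c0 c3 ∧ lineL c0 c1 c2.1 c2.2 = lam c0 c1 c2 ∧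
    lineL c1 c3 c2.1 c2.2 = lam c3 c2 c1 ∧ lineL c0 c3 c2.1 c2.2 = -lam c2 c3 c0 ∧
    lineL c0 c1 c3.1 c3.2 = -lam c1 c0 c3 ∧ lineL c1 c2 c3.1 c3.2 = -lam c3 c2 c1 ∧
    lineL c0 c2 c3.1 c3.2 = lam c2 c3 c0 := by
  refine ⟨?_, ?_, ?_, ?_, ?_, ?_, ?_, ?_, ?_⟩ <;> simp only [lineL, lam, det3] <;> ring

lemma lineL_affineCombination (p q a b c : ℝ × ℝ) {t₀ t₁ t₂ : ℝ} (ht : t₀ + t₁ + t₂ = 1) :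
    lineL p q (t₀ • a + t₁ • b + t₂ • c).1 (t₀ • a + t₁ • b + t₂ • c).2 =
      t₀ * lineL p q a.1 a.2 + t₁ * lineL p q b.1 b.2 + t₂ * lineL p q c.1 c.2 := by
  obtain rfl : t₂ = 1 - t₀ - t₁ := by linarith
  simp only [lineL, det3, Prod.fst_add, Prod.snd_add, Prod.smul_fst, Prod.smul_snd, smul_eq_mul]
  ring

lemma lam_eq_cross (p q r : ℝ × ℝ) :
    lam p q r = (p - r).1 * (q - r).2 - (p - r).2 * (q - r).1 := by
  simp only [lam, det3, Prod.fst_sub, Prod.snd_sub]; ring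

def lineDirDeriv (p q v : ℝ × ℝ) : ℝ := v.1 * (p.2 - q.2) - v.2 * (p.1 - q.1)

lemma lineDirDeriv_sub (p q a b : ℝ × ℝ) :
    lineDirDeriv p q (a - b) = lineL p q a.1 a.2 - lineL p q b.1 b.2 := by
  simp only [lineDirDeriv, lineL, det3, Prod.fst_sub, Prod.snd_sub]; ring

lemma hasDerivAt_lineL_comp (p q : ℝ × ℝ) {f g : ℝ → ℝ} {v : ℝ × ℝ} {t : ℝ}
    (hf : HasDerivAt f v.1 t) (hg : HasDerivAt g v.2 t) :
    HasDerivAt (fun t => lineL p q (f t) (g t)) (lineDirDeriv p q v) t :=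
  ((hf.mul_const _).sub (hg.mul_const _)).add_const _

section ImplicitCubic

variable (c0 c1 c2 c3 : ℝ × ℝ) (b0 b1 b2 b3 : ℝ)

def implicitCubic (x y : ℝ) : ℝ :=
  b0 * (lineL c0 c1 x y * lineL c1 c2 x y * lineL c2 c3 x y) +
    b1 * (lineL c0 c1 x y * lineL c1 c3 x y ^ 2) +
    b2 * (lineL c0 c2 x y ^ 2 * lineL c2 c3 x y) + b3 * lineL c0 c3 x y ^ 3

def implicitCubicDirDeriv (v : ℝ × ℝ) (x y : ℝ) : ℝ :=
  b0 * (lineDirDeriv c0 c1 v * lineL c1 c2 x y * lineL c2 c3 x y +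
      lineL c0 c1 x y * lineDirDeriv c1 c2 v * lineL c2 c3 x y +
      lineL c0 c1 x y * lineL c1 c2 x y * lineDirDeriv c2 c3 v) +
    b1 * (lineDirDeriv c0 c1 v * lineL c1 c3 x y ^ 2 +
      2 * lineL c0 c1 x y * lineL c1 c3 x y * lineDirDeriv c1 c3 v) +
    b2 * (2 * lineL c0 c2 x y * lineDirDeriv c0 c2 v * lineL c2 c3 x y +
      lineL c0 c2 x y ^ 2 * lineDirDeriv c2 c3 v) +
    b3 * (3 * lineL c0 c3 x y ^ 2 * lineDirDeriv c0 c3 v)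

lemma implicitCubicDirDeriv_eq_fst_add_snd (v : ℝ × ℝ) (x y : ℝ) :
    implicitCubicDirDeriv c0 c1 c2 c3 b0 b1 b2 b3 v x y =
      v.1 * implicitCubicDirDeriv c0 c1 c2 c3 b0 b1 b2 b3 (1, 0) x y +
        v.2 * implicitCubicDirDeriv c0 c1 c2 c3 b0 b1 b2 b3 (0, 1) x y := by
  simp only [implicitCubicDirDeriv, lineDirDeriv]; ring

lemma hasDerivAt_implicitCubic_comp {f g : ℝ → ℝ} {v : ℝ × ℝ} {t : ℝ}
    (hf : HasDerivAt f v.1 t) (hg : HasDerivAt g v.2 t) :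
    HasDerivAt (fun t => implicitCubic c0 c1 c2 c3 b0 b1 b2 b3 (f t) (g t))
      (implicitCubicDirDeriv c0 c1 c2 c3 b0 b1 b2 b3 v (f t) (g t)) t := by
  have hL (p q : ℝ × ℝ) := hasDerivAt_lineL_comp p q hf hg
  refine ((((hL c0 c1).mul (hL c1 c2)).mul (hL c2 c3)).const_mul b0 |>.add
    (((hL c0 c1).mul ((hL c1 c3).pow 2)).const_mul b1) |>.add
    ((((hL c0 c2).pow 2).mul (hL c2 c3)).const_mul b2) |>.add
    (((hL c0 c3).pow 3).const_mul b3)).congr_deriv ?_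
  simp only [implicitCubicDirDeriv, Pi.mul_apply, Pi.pow_apply]; push_cast; ring

lemma grad_implicitCubic (x y : ℝ) :
    grad (implicitCubic c0 c1 c2 c3 b0 b1 b2 b3) x y =
      (implicitCubicDirDeriv c0 c1 c2 c3 b0 b1 b2 b3 (1, 0) x y,
        implicitCubicDirDeriv c0 c1 c2 c3 b0 b1 b2 b3 (0, 1) x y) :=
  Prod.ext
    (hasDerivAt_implicitCubic_comp c0 c1 c2 c3 b0 b1 b2 b3 (hasDerivAt_id x)
      (hasDerivAt_const x y)).deriv
    (hasDerivAt_implicitCubic_comp c0 c1 c2 c3 b0 b1 b2 b3 (hasDerivAt_const y x)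
      (hasDerivAt_id y)).deriv

lemma grad_implicitCubic_eq_zero {v w : ℝ × ℝ} {x y : ℝ} (hvw : v.1 * w.2 - v.2 * w.1 ≠ 0)
    (hv : implicitCubicDirDeriv c0 c1 c2 c3 b0 b1 b2 b3 v x y = 0)
    (hw : implicitCubicDirDeriv c0 c1 c2 c3 b0 b1 b2 b3 w x y = 0) :
    grad (implicitCubic c0 c1 c2 c3 b0 b1 b2 b3) x y = 0 := by
  rw [implicitCubicDirDeriv_eq_fst_add_snd] at hv hw
  rw [grad_implicitCubic]
  set a := implicitCubicDirDeriv c0 c1 c2 c3 b0 b1 b2 b3 (1, 0) x y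
  set b := implicitCubicDirDeriv c0 c1 c2 c3 b0 b1 b2 b3 (0, 1) x y
  have ha : a * (v.1 * w.2 - v.2 * w.1) = 0 := by linear_combination w.2 * hv - v.2 * hw
  have hb : b * (v.1 * w.2 - v.2 * w.1) = 0 := by linear_combination v.1 * hw - w.1 * hv
  exact Prod.ext ((mul_eq_zero.mp ha).resolve_right hvw) ((mul_eq_zero.mp hb).resolve_right hvw)

end ImplicitCubic

theorem double_point_barycentric_c0c2c3_general (c0 c1 c2 c3 : ℝ × ℝ)
    (u0 u1 u2 u3 : ℝ)
    (l0 l1 l2 l3 : ℝ)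
    (hl0 : l0 = lam c3 c2 c1) (hl1 : l1 = lam c2 c3 c0)
    (hl2 : l2 = lam c1 c0 c3) (hl3 : l3 = lam c0 c1 c2)
    (hnc1 : l1 ≠ 0)
    (K0 K1 K2 K3 : ℝ → ℝ → ℝ)
    (hK0 : ∀ x y, K0 x y = lineL c0 c1 x y * lineL c1 c2 x y * lineL c2 c3 x y)
    (hK1 : ∀ x y, K1 x y = lineL c0 c1 x y * (lineL c1 c3 x y) ^ 2)
    (hK2 : ∀ x y, K2 x y = (lineL c0 c2 x y) ^ 2 * lineL c2 c3 x y)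
    (hK3 : ∀ x y, K3 x y = (lineL c0 c3 x y) ^ 3)
    (U L b0 b1 b2 b3 : ℝ)
    (hU : U = u0 * u1 * u2 * u3) (hL : L = l0 * l1 * l2 * l3)
    (hb0 : b0 = -(l1 ^ 2 * l2 ^ 2 * U - u1 ^ 2 * u2 ^ 2 * L))
    (hb1 : b1 = l1 ^ 3 * l3 * U - u1 ^ 3 * u3 * L)
    (hb2 : b2 = l0 * l2 ^ 3 * U - u0 * u2 ^ 3 * L)
    (hb3 : b3 = l0 ^ 2 * l3 ^ 2 * U - u0 ^ 2 * u3 ^ 2 * L)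
    (q : ℝ → ℝ → ℝ)
    (hq : ∀ x y, q x y = b0 * K0 x y + b1 * K1 x y + b2 * K2 x y + b3 * K3 x y)
    (phi1 phi2 phi3 : ℝ)
    (hphi1 : phi1 = u0 * u2 * l1 ^ 2 - u1 ^ 2 * l0 * l2)
    (hphi2 : phi2 = u1 * u3 * l2 ^ 2 - u2 ^ 2 * l1 * l3)
    (hphi3 : phi3 = u1 * u2 * l0 * l3 - u0 * u3 * l1 * l2)
    (S1 S2 : ℝ → ℝ → ℝ)
    (hS1 : ∀ x y, S1 x y = u2 * phi1 * lineL c0 c2 x y - u1 * phi3 * lineL c0 c3 x y)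
    (hS2 : ∀ x y, S2 x y = u1 * phi2 * lineL c1 c3 x y - u2 * phi3 * lineL c0 c3 x y)
    (D : ℝ) (hD : D = phi1 ^ 2 * u2 * u3 - phi1 * phi2 * u1 * u2 + phi2 * phi3 * u1 ^ 2)
    (hDne : D ≠ 0)
    (s : ℝ × ℝ)
    (hs : s = D⁻¹ • ((phi1 ^ 2 * u2 * u3) • c0 - (phi1 * phi2 * u1 * u2) • c2 +
      (phi2 * phi3 * u1 ^ 2) • c3)) :
    S1 s.1 s.2 = 0 ∧ S2 s.1 s.2 = 0 ∧ q s.1 s.2 = 0 ∧ grad q s.1 s.2 = (0 : ℝ × ℝ) := by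
  have hweights : phi1 ^ 2 * u2 * u3 * D⁻¹ + -(phi1 * phi2 * u1 * u2) * D⁻¹ +
      phi2 * phi3 * u1 ^ 2 * D⁻¹ = 1 := by
    rw [← add_mul, ← add_mul, ← sub_eq_add_neg, ← hD, mul_inv_cancel₀ hDne]
  obtain rfl : s = (phi1 ^ 2 * u2 * u3 * D⁻¹) • c0 + (-(phi1 * phi2 * u1 * u2) * D⁻¹) • c2 +
      (phi2 * phi3 * u1 ^ 2 * D⁻¹) • c3 := by rw [hs]; module
  obtain rfl : q = implicitCubic c0 c1 c2 c3 b0 b1 b2 b3 := by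
    funext x y; rw [hq, hK0, hK1, hK2, hK3, implicitCubic]
  subst hl0 hl1 hl2 hl3 hU hL hb0 hb1 hb2 hb3 hphi1 hphi2 hphi3
  refine ⟨?_, ?_, ?_, grad_implicitCubic_eq_zero _ _ _ _ _ _ _ _ (v := c2 - c0) (w := c3 - c0)
    (by rwa [← lam_eq_cross]) ?_ ?_⟩
  all_goals
    simp only [hS1, hS2, implicitCubic, implicitCubicDirDeriv, lineDirDeriv_sub,
      lineL_affineCombination _ _ _ _ _ hweights, lineL_left, lineL_right,
      lineL_controlPoints_eq_lam c0 c1 c2 c3]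
    ring

/-- the barycentric combination of `c0, c2, c3` giving the double point. -/
theorem double_point_barycentric_c0c2c3 (c0 c1 c2 c3 : ℝ × ℝ) (w0 w1 w2 w3 : ℝ)
    (hw0 : w0 ≠ 0) (hw1 : w1 ≠ 0) (hw2 : w2 ≠ 0) (hw3 : w3 ≠ 0)
    (u0 u1 u2 u3 : ℝ)
    (hu0 : u0 = w0) (hu1 : u1 = 3 * w1) (hu2 : u2 = 3 * w2) (hu3 : u3 = w3)
    (l0 l1 l2 l3 : ℝ)
    (hl0 : l0 = lam c3 c2 c1) (hl1 : l1 = lam c2 c3 c0)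
    (hl2 : l2 = lam c1 c0 c3) (hl3 : l3 = lam c0 c1 c2)
    (hnc0 : l0 ≠ 0) (hnc1 : l1 ≠ 0) (hnc2 : l2 ≠ 0) (hnc3 : l3 ≠ 0)
    (K0 K1 K2 K3 : ℝ → ℝ → ℝ)
    (hK0 : ∀ x y, K0 x y = lineL c0 c1 x y * lineL c1 c2 x y * lineL c2 c3 x y)
    (hK1 : ∀ x y, K1 x y = lineL c0 c1 x y * (lineL c1 c3 x y) ^ 2)
    (hK2 : ∀ x y, K2 x y = (lineL c0 c2 x y) ^ 2 * lineL c2 c3 x y)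
    (hK3 : ∀ x y, K3 x y = (lineL c0 c3 x y) ^ 3)
    (U L b0 b1 b2 b3 : ℝ)
    (hU : U = u0 * u1 * u2 * u3) (hL : L = l0 * l1 * l2 * l3)
    (hb0 : b0 = -(l1 ^ 2 * l2 ^ 2 * U - u1 ^ 2 * u2 ^ 2 * L))
    (hb1 : b1 = l1 ^ 3 * l3 * U - u1 ^ 3 * u3 * L)
    (hb2 : b2 = l0 * l2 ^ 3 * U - u0 * u2 ^ 3 * L)
    (hb3 : b3 = l0 ^ 2 * l3 ^ 2 * U - u0 ^ 2 * u3 ^ 2 * L)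
    (q : ℝ → ℝ → ℝ)
    (hq : ∀ x y, q x y = b0 * K0 x y + b1 * K1 x y + b2 * K2 x y + b3 * K3 x y)
    (phi1 phi2 phi3 : ℝ)
    (hphi1 : phi1 = u0 * u2 * l1 ^ 2 - u1 ^ 2 * l0 * l2)
    (hphi2 : phi2 = u1 * u3 * l2 ^ 2 - u2 ^ 2 * l1 * l3)
    (hphi3 : phi3 = u1 * u2 * l0 * l3 - u0 * u3 * l1 * l2)
    (hphi1ne : phi1 ≠ 0) (hphi2ne : phi2 ≠ 0)
    (S1 S2 : ℝ → ℝ → ℝ)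
    (hS1 : ∀ x y, S1 x y = u2 * phi1 * lineL c0 c2 x y - u1 * phi3 * lineL c0 c3 x y)
    (hS2 : ∀ x y, S2 x y = u1 * phi2 * lineL c1 c3 x y - u2 * phi3 * lineL c0 c3 x y)
    (D : ℝ) (hD : D = phi1 ^ 2 * u2 * u3 - phi1 * phi2 * u1 * u2 + phi2 * phi3 * u1 ^ 2)
    (hDne : D ≠ 0)
    (s : ℝ × ℝ)
    (hs : s = D⁻¹ • ((phi1 ^ 2 * u2 * u3) • c0 - (phi1 * phi2 * u1 * u2) • c2 +
      (phi2 * phi3 * u1 ^ 2) • c3)) :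
    S1 s.1 s.2 = 0 ∧ S2 s.1 s.2 = 0 ∧ q s.1 s.2 = 0 ∧ grad q s.1 s.2 = (0 : ℝ × ℝ) :=
  double_point_barycentric_c0c2c3_general c0 c1 c2 c3 u0 u1 u2 u3 l0 l1 l2 l3 hl0 hl1 hl2 hl3 hnc1
    K0 K1 K2 K3 hK0 hK1 hK2 hK3 U L b0 b1 b2 b3 hU hL hb0 hb1 hb2 hb3 q hq phi1 phi2 phi3 hphi1
    hphi2 hphi3 S1 S2 hS1 hS2 D hD hDne s hs
end
end

section
/- Suppose all weights are nonzero (wi ≠ 0 for i = 0,1,2,3), no three of the control points are collinear (λi ≠ 0 for i = 0,1,2,3), and φ1 = 0 and φ2 = 0. Then q2 is a nonzero polynomial of total degree 2, and q2(p(t)) = 0 for every t with w(t) ≠ 0; i.e., q2(x,y) = u0u3·L_{03}(x,y)² − u1u2·L_{01}(x,y)·L_{23}(x,y) = 0 is the implicit representation of the degenerate (conic) curve. -/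
noncomputable section

/-- The line L_{ij} as a polynomial in two variables. -/
def linePoly (p q : ℝ × ℝ) : MvPolynomial (Fin 2) ℝ :=
  MvPolynomial.C (p.2 - q.2) * MvPolynomial.X 0 +
    MvPolynomial.C (q.1 - p.1) * MvPolynomial.X 1 +
    MvPolynomial.C (p.1 * q.2 - p.2 * q.1)

/-! Restricted to the line through `c₀` and `c₁`, the factor `L₀₁` of `q₂` vanishes and `L₀₃`
becomes `λ₂` times the parameter, so `q₂` restricts to `u₀u₃λ₂² X²` and has total degree at
least `2`. Along the curve `w · L_{ij}(p) = Σₖ uₖ Bₖ λ_{kij}` (the `Bₖ` being the Bernstein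
monomials), so `w² q₂(p)` is a sextic form in `(1 - t, t)` whose coefficients are combinations
of `φ₁`, `φ₂` and `φ₃ = u₁u₂λ₀λ₃ − u₀u₃λ₁λ₂`. Finally `u₁λ₂φ₃ = −u₂λ₃φ₁ − u₀λ₁φ₂`, so
`φ₁ = φ₂ = 0` forces `φ₃ = 0`. -/

open MvPolynomial

def conicPoly (c0 c1 c2 c3 : ℝ × ℝ) (u0 u1 u2 u3 : ℝ) : MvPolynomial (Fin 2) ℝ :=
  C (u0 * u3) * linePoly c0 c3 ^ 2 - C (u1 * u2) * (linePoly c0 c1 * linePoly c2 c3)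

def lineParam (a b : ℝ × ℝ) : Fin 2 → Polynomial ℝ :=
  ![Polynomial.C (b.1 - a.1) * Polynomial.X + Polynomial.C a.1,
    Polynomial.C (b.2 - a.2) * Polynomial.X + Polynomial.C a.2]

theorem eval_linePoly (p q : ℝ × ℝ) (x y : ℝ) :
    eval ![x, y] (linePoly p q) = lineL p q x y := by
  simp only [linePoly, lineL, det3, map_add, map_mul, eval_C, eval_X, Matrix.cons_val_zero,
    Matrix.cons_val_one, Matrix.cons_val_fin_one]
  ring

theorem lineL_inv_smul_sum {ι : Type*} (s : Finset ι) (a : ι → ℝ) (c : ι → ℝ × ℝ)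
    (p q : ℝ × ℝ) (ha : ∑ i ∈ s, a i ≠ 0) :
    lineL p q ((∑ i ∈ s, a i)⁻¹ • ∑ i ∈ s, a i • c i).1
        ((∑ i ∈ s, a i)⁻¹ • ∑ i ∈ s, a i • c i).2 =
      (∑ i ∈ s, a i)⁻¹ * ∑ i ∈ s, a i * lam (c i) p q := by
  have hlam (i : ι) : a i * lam (c i) p q =
      a i * (c i).1 * (p.2 - q.2) - a i * (c i).2 * (p.1 - q.1) + a i * (p.1 * q.2 - p.2 * q.1) := by
    simp only [lam, det3]
    ring
  simp only [hlam, lineL, det3, Finset.sum_add_distrib, Finset.sum_sub_distrib, ← Finset.sum_mul,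
    Prod.smul_fst, Prod.smul_snd, Prod.fst_sum, Prod.snd_sum, smul_eq_mul]
  field_simp

theorem totalDegree_linePoly_le (p q : ℝ × ℝ) : (linePoly p q).totalDegree ≤ 1 := by
  have hCX (a : ℝ) (i : Fin 2) : (C a * X i : MvPolynomial (Fin 2) ℝ).totalDegree ≤ 1 :=
    (totalDegree_mul _ _).trans (by rw [totalDegree_C, totalDegree_X])
  refine (totalDegree_add _ _).trans (max_le ?_ ?_)
  · exact (totalDegree_add _ _).trans (max_le (hCX _ _) (hCX _ _))
  · rw [totalDegree_C]
    exact zero_le_one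

theorem totalDegree_conicPoly_le (c0 c1 c2 c3 : ℝ × ℝ) (u0 u1 u2 u3 : ℝ) :
    (conicPoly c0 c1 c2 c3 u0 u1 u2 u3).totalDegree ≤ 2 := by
  have h03 := totalDegree_linePoly_le c0 c3
  have h01 := totalDegree_linePoly_le c0 c1
  have h23 := totalDegree_linePoly_le c2 c3
  refine (totalDegree_sub _ _).trans (max_le ?_ ?_)
  · refine (totalDegree_mul _ _).trans ?_
    rw [totalDegree_C, zero_add]
    exact (totalDegree_pow _ 2).trans (by omega)
  · refine (totalDegree_mul _ _).trans ?_
    rw [totalDegree_C, zero_add]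
    exact (totalDegree_mul _ _).trans (by omega)

theorem aeval_lineParam_linePoly (a b p q : ℝ × ℝ) :
    aeval (lineParam a b) (linePoly p q) =
      Polynomial.C (lam b p q - lam a p q) * Polynomial.X + Polynomial.C (lam a p q) := by
  simp only [linePoly, lineParam, lam, det3, map_add, map_mul, aeval_X, aeval_C,
    Polynomial.algebraMap_eq, Matrix.cons_val_zero, Matrix.cons_val_one]
  simp only [Polynomial.C_add, Polynomial.C_sub, Polynomial.C_mul]
  ring

theorem aeval_lineParam_conicPoly (c0 c1 c2 c3 : ℝ × ℝ) (u0 u1 u2 u3 : ℝ) :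
    aeval (lineParam c0 c1) (conicPoly c0 c1 c2 c3 u0 u1 u2 u3) =
      Polynomial.C (u0 * u3 * lam c1 c0 c3 ^ 2) * Polynomial.X ^ 2 := by
  have h01 : lam c0 c0 c1 = 0 ∧ lam c1 c0 c1 = 0 ∧ lam c0 c0 c3 = 0 := by
    simp only [lam, det3]
    refine ⟨?_, ?_, ?_⟩ <;> ring
  simp only [conicPoly, map_sub, map_mul, map_pow, aeval_lineParam_linePoly, h01, aeval_C,
    Polynomial.algebraMap_eq, sub_zero, Polynomial.C_0, zero_mul, add_zero, mul_zero]
  ring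

theorem totalDegree_conicPoly (c0 c1 c2 c3 : ℝ × ℝ) (u0 u1 u2 u3 : ℝ)
    (h : u0 * u3 * lam c1 c0 c3 ^ 2 ≠ 0) :
    (conicPoly c0 c1 c2 c3 u0 u1 u2 u3).totalDegree = 2 := by
  refine le_antisymm (totalDegree_conicPoly_le ..) ?_
  have hlin (i : Fin 2) : (lineParam c0 c1 i).natDegree ≤ 1 := by
    fin_cases i <;> exact Polynomial.natDegree_linear_le
  have := aeval_natDegree_le (conicPoly c0 c1 c2 c3 u0 u1 u2 u3) le_rfl _ hlin
  rwa [aeval_lineParam_conicPoly, Polynomial.natDegree_C_mul_X_pow 2 _ h, mul_one] at this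

theorem conic_identity {u0 u1 u2 u3 l0 l1 l2 l3 : ℝ} (hu1 : u1 ≠ 0) (hl2 : l2 ≠ 0)
    (hphi1 : u0 * u2 * l1 ^ 2 - u1 ^ 2 * l0 * l2 = 0)
    (hphi2 : u1 * u3 * l2 ^ 2 - u2 ^ 2 * l1 * l3 = 0) (s t : ℝ) :
    u0 * u3 * (u1 * (t * s ^ 2) * l2 - u2 * (t ^ 2 * s) * l1) ^ 2 -
      u1 * u2 * ((u2 * (t ^ 2 * s) * l3 - u3 * t ^ 3 * l2) *
        (u0 * s ^ 3 * l1 - u1 * (t * s ^ 2) * l0)) = 0 := by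
  have hphi3 : u1 * u2 * l0 * l3 - u0 * u3 * l1 * l2 = 0 := by
    refine (mul_eq_zero.mp ?_).resolve_left (mul_ne_zero hu1 hl2)
    linear_combination (-(u2 * l3)) * hphi1 - u0 * l1 * hphi2
  linear_combination (u2 * u3 * t ^ 4 * s ^ 2) * hphi1 + (u0 * u1 * t ^ 2 * s ^ 4) * hphi2 +
    (u1 * u2 * t ^ 3 * s ^ 3) * hphi3

theorem eval_conicPoly (c0 c1 c2 c3 : ℝ × ℝ) (u0 u1 u2 u3 x y : ℝ) :
    eval ![x, y] (conicPoly c0 c1 c2 c3 u0 u1 u2 u3) =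
      u0 * u3 * lineL c0 c3 x y ^ 2 - u1 * u2 * (lineL c0 c1 x y * lineL c2 c3 x y) := by
  simp [conicPoly, eval_linePoly]

theorem eval_conicPoly_ratBezier (c0 c1 c2 c3 : ℝ × ℝ) {u0 u1 u2 u3 : ℝ} (hu1 : u1 ≠ 0)
    (hl2 : lam c1 c0 c3 ≠ 0)
    (hphi1 : u0 * u2 * lam c2 c3 c0 ^ 2 - u1 ^ 2 * lam c3 c2 c1 * lam c1 c0 c3 = 0)
    (hphi2 : u1 * u3 * lam c1 c0 c3 ^ 2 - u2 ^ 2 * lam c2 c3 c0 * lam c0 c1 c2 = 0)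
    {t w : ℝ} {P : ℝ × ℝ} (hw0 : w ≠ 0)
    (hw : w = u0 * (1 - t) ^ 3 + u1 * (t * (1 - t) ^ 2) + u2 * (t ^ 2 * (1 - t)) + u3 * t ^ 3)
    (hP : P = w⁻¹ • ((u0 * (1 - t) ^ 3) • c0 + (u1 * (t * (1 - t) ^ 2)) • c1 +
        (u2 * (t ^ 2 * (1 - t))) • c2 + (u3 * t ^ 3) • c3)) :
    eval ![P.1, P.2] (conicPoly c0 c1 c2 c3 u0 u1 u2 u3) = 0 := by
  set a : Fin 4 → ℝ := ![u0 * (1 - t) ^ 3, u1 * (t * (1 - t) ^ 2), u2 * (t ^ 2 * (1 - t)), u3 * t ^ 3]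
  have hsum : ∑ i, a i = w := by simp [a, Fin.sum_univ_four, hw]
  have hL (p q : ℝ × ℝ) : lineL p q P.1 P.2 =
      w⁻¹ * (a 0 * lam c0 p q + a 1 * lam c1 p q + a 2 * lam c2 p q + a 3 * lam c3 p q) := by
    have := lineL_inv_smul_sum Finset.univ a ![c0, c1, c2, c3] p q (hsum ▸ hw0)
    simpa [hsum, Fin.sum_univ_four, ← hP, a] using this
  have h03 : lineL c0 c3 P.1 P.2 = w⁻¹ * (a 1 * lam c1 c0 c3 - a 2 * lam c2 c3 c0) := by
    rw [hL]
    simp only [lam, det3]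
    ring
  have h01 : lineL c0 c1 P.1 P.2 = w⁻¹ * (a 2 * lam c0 c1 c2 - a 3 * lam c1 c0 c3) := by
    rw [hL]
    simp only [lam, det3]
    ring
  have h23 : lineL c2 c3 P.1 P.2 = w⁻¹ * (a 0 * lam c2 c3 c0 - a 1 * lam c3 c2 c1) := by
    rw [hL]
    simp only [lam, det3]
    ring
  rw [eval_conicPoly, h03, h01, h23]
  simp only [a, Matrix.cons_val]
  linear_combination w⁻¹ ^ 2 * conic_identity hu1 hl2 hphi1 hphi2 (1 - t) t

/-- when `φ₁ = φ₂ = 0`, the polynomial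
`q₂ = u₀u₃·L₀₃² − u₁u₂·L₀₁·L₂₃` is a nonzero polynomial of total degree 2 that
vanishes along the curve, i.e. it is the implicit representation of the conic. -/
theorem conic_implicit_representation (c0 c1 c2 c3 : ℝ × ℝ) (w0 w1 w2 w3 : ℝ)
    (hw0 : w0 ≠ 0) (hw1 : w1 ≠ 0) (hw2 : w2 ≠ 0) (hw3 : w3 ≠ 0)
    (u0 u1 u2 u3 : ℝ)
    (hu0 : u0 = w0) (hu1 : u1 = 3 * w1) (hu2 : u2 = 3 * w2) (hu3 : u3 = w3)
    (l0 l1 l2 l3 : ℝ)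
    (hl0 : l0 = lam c3 c2 c1) (hl1 : l1 = lam c2 c3 c0)
    (hl2 : l2 = lam c1 c0 c3) (hl3 : l3 = lam c0 c1 c2)
    (hnc0 : l0 ≠ 0) (hnc1 : l1 ≠ 0) (hnc2 : l2 ≠ 0) (hnc3 : l3 ≠ 0)
    (phi1 phi2 phi3 : ℝ)
    (hphi1 : phi1 = u0 * u2 * l1 ^ 2 - u1 ^ 2 * l0 * l2)
    (hphi2 : phi2 = u1 * u3 * l2 ^ 2 - u2 ^ 2 * l1 * l3)
    (hphi3 : phi3 = u1 * u2 * l0 * l3 - u0 * u3 * l1 * l2)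
    (hphi1 : phi1 = 0) (hphi2 : phi2 = 0)
    (w : ℝ → ℝ) (p : ℝ → ℝ × ℝ)
    (hw : ∀ t, w t = u0 * (1 - t) ^ 3 + u1 * (t * (1 - t) ^ 2) + u2 * (t ^ 2 * (1 - t)) + u3 * t ^ 3)
    (hp : ∀ t, w t ≠ 0 → p t = (w t)⁻¹ •
      ((u0 * (1 - t) ^ 3) • c0 + (u1 * (t * (1 - t) ^ 2)) • c1 +
        (u2 * (t ^ 2 * (1 - t))) • c2 + (u3 * t ^ 3) • c3))
    (Q2 : MvPolynomial (Fin 2) ℝ)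
    (hQ2 : Q2 = MvPolynomial.C (u0 * u3) * (linePoly c0 c3) ^ 2 -
      MvPolynomial.C (u1 * u2) * (linePoly c0 c1 * linePoly c2 c3)) :
    Q2 ≠ 0 ∧ Q2.totalDegree = 2 ∧
      ∀ t, w t ≠ 0 → MvPolynomial.eval ![(p t).1, (p t).2] Q2 = 0 := by
  have e1 : u0 * u2 * l1 ^ 2 - u1 ^ 2 * l0 * l2 = 0 :=
    ‹phi1 = u0 * u2 * l1 ^ 2 - u1 ^ 2 * l0 * l2› ▸ hphi1
  have e2 : u1 * u3 * l2 ^ 2 - u2 ^ 2 * l1 * l3 = 0 :=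
    ‹phi2 = u1 * u3 * l2 ^ 2 - u2 ^ 2 * l1 * l3› ▸ hphi2
  subst hl0 hl1 hl2 hl3 hQ2
  have hdeg := totalDegree_conicPoly c0 c1 c2 c3 u0 u1 u2 u3
    (mul_ne_zero (mul_ne_zero (hu0 ▸ hw0) (hu3 ▸ hw3)) (pow_ne_zero 2 hnc2))
  refine ⟨fun h0 => ?_, hdeg, fun t ht => ?_⟩
  · rw [conicPoly, h0, totalDegree_zero] at hdeg
    exact two_ne_zero hdeg.symm
  · exact eval_conicPoly_ratBezier c0 c1 c2 c3 (hu1 ▸ mul_ne_zero three_ne_zero hw1) hnc2 e1 e2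
      ht (hw t) (hp t ht)
end
end

section
/- Suppose no three of the points c0, c1, c2, c3 are collinear (λi ≠ 0 for i = 0,1,2,3). Then the four polynomials K0, K1, K2, K3 are linearly independent in ℝ[x,y]: if β0, β1, β2, β3 ∈ ℝ satisfy β0K0(x,y) + β1K1(x,y) + β2K2(x,y) + β3K3(x,y) = 0 for all (x,y) ∈ ℝ², then β0 = β1 = β2 = β3 = 0. -/
/-!
Restrict the vanishing combination to lines through `c0`, along which every `L_{ij}` is affine in
the line parameter, and read off the coefficients of the resulting cubic. On the line `c0c1`,
`L_{01}` kills `K0` and `K1`; the `t²`-coefficient is `β2 λ3² λ1`, and then the `t³`-coefficient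
is `β3 λ2³`. On the line `c0c3`, `L_{03}` kills `K3` (and `K2` is gone as `β2 = 0`); the vanishing
of the `s`- and `s³`-coefficients forces `β0 λ0 λ1 = 0` and then `β1 λ2² = 0`.
-/

noncomputable section

open AffineMap

theorem lam_rotate (p q r : ℝ × ℝ) : lam p q r = lam q r p := by
  simp only [lam, det3]; ring

theorem lam_swap (p q r : ℝ × ℝ) : lam p q r = -lam q p r := by
  simp only [lam, det3]; ring

theorem lam_self_left (p q : ℝ × ℝ) : lam p p q = 0 := by
  simp only [lam, det3]; ring

theorem lam_self_right (p q : ℝ × ℝ) : lam p q p = 0 := by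
  simp only [lam, det3]; ring

theorem lineL_lineMap (p q a b : ℝ × ℝ) (t : ℝ) :
    lineL p q (lineMap a b t).1 (lineMap a b t).2 = (1 - t) * lam a p q + t * lam b p q := by
  simp only [lineL, lam, det3, lineMap_apply_module, Prod.fst_add, Prod.snd_add,
    Prod.smul_fst, Prod.smul_snd, smul_eq_mul]
  ring

theorem coeffs_eq_zero_of_forall_cubic_eq_zero {a b c d : ℝ}
    (h : ∀ t : ℝ, a + b * t + c * t ^ 2 + d * t ^ 3 = 0) : a = 0 ∧ b = 0 ∧ c = 0 ∧ d = 0 := by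
  have h0 := h 0
  have h1 := h 1
  have h2 := h (-1)
  have h3 := h 2
  norm_num at h0 h1 h2 h3
  refine ⟨?_, ?_, ?_, ?_⟩ <;> linarith

section

variable {c0 c1 c2 c3 : ℝ × ℝ} {β0 β1 β2 β3 : ℝ}

theorem coeffs_K2_K3_eq_zero (h1 : lam c2 c3 c0 ≠ 0) (h2 : lam c1 c0 c3 ≠ 0)
    (h3 : lam c0 c1 c2 ≠ 0)
    (h : ∀ x y, β0 * (lineL c0 c1 x y * lineL c1 c2 x y * lineL c2 c3 x y) +
      β1 * (lineL c0 c1 x y * lineL c1 c3 x y ^ 2) + β2 * (lineL c0 c2 x y ^ 2 * lineL c2 c3 x y) +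
      β3 * lineL c0 c3 x y ^ 3 = 0) :
    β2 = 0 ∧ β3 = 0 := by
  have cubic : ∀ t : ℝ, 0 + 0 * t + β2 * lam c1 c0 c2 ^ 2 * lam c0 c2 c3 * t ^ 2 +
      (β3 * lam c1 c0 c3 ^ 3 + β2 * lam c1 c0 c2 ^ 2 * (lam c1 c2 c3 - lam c0 c2 c3)) * t ^ 3
      = 0 := by
    intro t
    have ht := h (lineMap c0 c1 t).1 (lineMap c0 c1 t).2
    simp only [lineL_lineMap, lam_self_left, lam_self_right, mul_zero, add_zero] at ht
    linear_combination ht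
  obtain ⟨-, -, hc2, hc3⟩ := coeffs_eq_zero_of_forall_cubic_eq_zero cubic
  rw [lam_swap c1, lam_rotate c0 c2 c3] at hc2
  have hβ2 : β2 = 0 := by simpa [h1, h3] using hc2
  subst hβ2
  exact ⟨rfl, by simpa [h2] using hc3⟩

theorem coeffs_K0_K1_eq_zero (h0 : lam c3 c2 c1 ≠ 0) (h1 : lam c2 c3 c0 ≠ 0)
    (h2 : lam c1 c0 c3 ≠ 0)
    (h : ∀ x y, β0 * (lineL c0 c1 x y * lineL c1 c2 x y * lineL c2 c3 x y) +
      β1 * (lineL c0 c1 x y * lineL c1 c3 x y ^ 2) = 0) :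
    β0 = 0 ∧ β1 = 0 := by
  have cubic : ∀ s : ℝ, 0 +
      lam c3 c0 c1 * (β0 * lam c0 c2 c3 * lam c0 c1 c2 + β1 * lam c0 c1 c3 ^ 2) * s +
      lam c3 c0 c1 * (β0 * lam c0 c2 c3 * (lam c3 c1 c2 - 2 * lam c0 c1 c2)
        - 2 * β1 * lam c0 c1 c3 ^ 2) * s ^ 2 +
      -lam c3 c0 c1 * (β0 * lam c0 c2 c3 * (lam c3 c1 c2 - lam c0 c1 c2)
        - β1 * lam c0 c1 c3 ^ 2) * s ^ 3 = 0 := by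
    intro s
    have hs := h (lineMap c0 c3 s).1 (lineMap c0 c3 s).2
    simp only [lineL_lineMap, lam_self_left, lam_self_right, mul_zero, add_zero,
      zero_add] at hs
    linear_combination hs
  obtain ⟨-, hA, -, hB⟩ := coeffs_eq_zero_of_forall_cubic_eq_zero cubic
  have he : lam c3 c0 c1 ≠ 0 := by
    rw [lam_rotate, lam_swap]
    exact neg_ne_zero.mpr h2
  replace hA := (mul_eq_zero.mp hA).resolve_left he
  replace hB := (mul_eq_zero.mp hB).resolve_left (neg_ne_zero.mpr he)
  have hβ0 : β0 = 0 := by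
    have h01 : β0 * lam c0 c2 c3 * lam c3 c1 c2 = 0 := by linear_combination hA + hB
    rw [lam_rotate c0 c2 c3, lam_swap c3, lam_rotate c1 c3 c2] at h01
    simpa [h0, h1] using h01
  subst hβ0
  rw [lam_swap c0 c1 c3] at hA
  exact ⟨rfl, by simpa [h2] using hA⟩

end

/-- linear independence of the four basis functions `K₀, K₁, K₂, K₃`. -/
theorem basis_functions_linearly_independent (c0 c1 c2 c3 : ℝ × ℝ)
    (l0 l1 l2 l3 : ℝ)
    (hl0 : l0 = lam c3 c2 c1) (hl1 : l1 = lam c2 c3 c0)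
    (hl2 : l2 = lam c1 c0 c3) (hl3 : l3 = lam c0 c1 c2)
    (hnc0 : l0 ≠ 0) (hnc1 : l1 ≠ 0) (hnc2 : l2 ≠ 0) (hnc3 : l3 ≠ 0)
    (K0 K1 K2 K3 : ℝ → ℝ → ℝ)
    (hK0 : ∀ x y, K0 x y = lineL c0 c1 x y * lineL c1 c2 x y * lineL c2 c3 x y)
    (hK1 : ∀ x y, K1 x y = lineL c0 c1 x y * (lineL c1 c3 x y) ^ 2)
    (hK2 : ∀ x y, K2 x y = (lineL c0 c2 x y) ^ 2 * lineL c2 c3 x y)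
    (hK3 : ∀ x y, K3 x y = (lineL c0 c3 x y) ^ 3) :
    ∀ β0 β1 β2 β3 : ℝ,
      (∀ x y : ℝ, β0 * K0 x y + β1 * K1 x y + β2 * K2 x y + β3 * K3 x y = 0) →
      β0 = 0 ∧ β1 = 0 ∧ β2 = 0 ∧ β3 = 0 := by
  subst hl0 hl1 hl2 hl3
  intro β0 β1 β2 β3 h
  simp only [hK0, hK1, hK2, hK3] at h
  obtain ⟨rfl, rfl⟩ := coeffs_K2_K3_eq_zero hnc1 hnc2 hnc3 h
  simp only [zero_mul, add_zero] at h
  obtain ⟨rfl, rfl⟩ := coeffs_K0_K1_eq_zero hnc0 hnc1 hnc2 h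
  exact ⟨rfl, rfl, rfl, rfl⟩
end
end
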